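/- Let BS = <(w_1,q_1),…,(w_m,q_m)> be a blocking scheme and define per-level costs q̂_i by q̂_i = q_j if level i is the first level of block j and q̂_i = 0 otherwise. Then for any prefix tree T of height h, the decode time Δ(T) = Σ_c freq(c)·Δ_T(c) equals Σ_{ℓ=0}^{h−1} q̂_{ℓ+1} · P_{2·i_ℓ − i_{ℓ+1}}, where P is the prefix sum array of frequencies sorted consistently with leaf depths and i_ℓ is the number of internal nodes at depth ≥ ℓ. -/

import Mathlib

/-- A full binary tree: every node is a leaf or has exactly two children. -/
inductive FBT where
  | leaf : FBT
  | node : FBT → FBT → FBT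

namespace FBT

/-- Multiset of depths of the leaves (root at depth 0). -/
def leafDepths : FBT → Multiset ℕ
  | leaf => {0}
  | node l r => (l.leafDepths + r.leafDepths).map (· + 1)

/-- Multiset of depths of the internal nodes (root at depth 0). -/
def internalDepths : FBT → Multiset ℕ
  | leaf => 0
  | node l r => 0 ::ₘ (l.internalDepths + r.internalDepths).map (· + 1)

/-- Number of leaves. -/
def numLeaves (t : FBT) : ℕ := Multiset.card t.leafDepths

/-- Height = maximum leaf depth. -/
def height : FBT → ℕ
  | leaf => 0
  | node l r => max l.height r.height + 1

/-- `iAt t ℓ` = number of internal nodes at depth ≥ ℓ. -/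
def iAt (t : FBT) (ℓ : ℕ) : ℕ :=
  Multiset.card (t.internalDepths.filter (fun d => ℓ ≤ d))

end FBT

/-- For a blocking scheme `<(w 1, q 1), …, (w m, q m)>`, the per-level cost `q̂ i`:
`q̂ i = q j` if level `i` (1-indexed) is the first level of block `j`
(i.e. `i = 1 + w 1 + ⋯ + w (j-1)`), and `q̂ i = 0` otherwise. -/
def qhatOf (m : ℕ) (w q : ℕ → ℕ) (i : ℕ) : ℕ :=
  ∑ j ∈ Finset.Icc 1 m, if i = 1 + ∑ s ∈ Finset.Icc 1 (j - 1), w s then q j else 0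

/-!
Both sides sum `f (leaf) * q̂ (ℓ + 1)` over the pairs of a leaf and a level with
`ℓ + 1 ≤ depth (leaf)`. Summing over the leaves first gives the decode time. Summing over the
levels first, the leaves of depth `≥ ℓ + 1` are, by the depth ordering, the first
`2 i_ℓ - i_{ℓ+1}` ones: the nodes at depth `≥ ℓ + 1` are the children of the `i_ℓ` internal
nodes at depth `≥ ℓ`, two each.
-/

open Finset

lemma sum_Icc_one_eq_sum_range {M : Type*} [AddCommMonoid M] (d : ℕ) (b : ℕ → M) :
    ∑ j ∈ Icc 1 d, b j = ∑ ℓ ∈ range d, b (ℓ + 1) := by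
  rw [← Ico_add_one_right_eq_Icc, sum_Ico_eq_sum_range]
  simp only [add_tsub_cancel_right, add_comm]

lemma Multiset.card_filter_map_add_one_le (s : Multiset ℕ) (k : ℕ) :
    Multiset.card ((s.map (· + 1)).filter (k + 1 ≤ ·)) = Multiset.card (s.filter (k ≤ ·)) := by
  simp [Multiset.filter_map]

/-- The entries `≥ c` of a nonincreasing list form a prefix. -/
lemma sum_range_ite_le_getD_of_pairwise_ge {M : Type*} [AddCommMonoid M] (c : ℕ) :
    ∀ (L : List ℕ) (g : ℕ → M), L.Pairwise (· ≥ ·) →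
      ∑ i ∈ range L.length, (if c ≤ L.getD i 0 then g i else 0) =
        ∑ i ∈ range (L.countP (c ≤ ·)), g i
  | [], _, _ => by simp
  | a :: L, g, hsorted => by
    obtain ⟨ha, hL⟩ := List.pairwise_cons.1 hsorted
    rw [List.length_cons, sum_range_succ', List.countP_cons]
    simp only [List.getD_cons_zero, List.getD_cons_succ, decide_eq_true_eq]
    by_cases hca : c ≤ a
    · rw [if_pos hca, if_pos hca, sum_range_ite_le_getD_of_pairwise_ge c L (g <| · + 1) hL,
        ← sum_range_succ']
    · have hcount : L.countP (c ≤ ·) = 0 :=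
        List.countP_eq_zero.2 fun b hb hcb => hca ((of_decide_eq_true hcb).trans (ha b hb))
      rw [if_neg hca, if_neg hca, hcount, add_zero, zero_add]
      refine sum_eq_zero fun i hi => if_neg fun hci => hca (hci.trans (ha _ ?_))
      rw [List.getD_eq_getElem L 0 (mem_range.1 hi)]
      exact List.getElem_mem _

lemma sum_mul_sum_Icc_getD_eq_of_pairwise_ge {R : Type*} [CommSemiring R] (L : List ℕ)
    (hsorted : L.Pairwise (· ≥ ·)) (H : ℕ) (hH : ∀ d ∈ L, d ≤ H) (a b : ℕ → R) :
    ∑ i ∈ range L.length, a (i + 1) * ∑ j ∈ Icc 1 (L.getD i 0), b j =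
      ∑ ℓ ∈ range H, b (ℓ + 1) * ∑ j ∈ Icc 1 (L.countP (ℓ + 1 ≤ ·)), a j := by
  have hlevels : ∀ i < L.length,
      range (L.getD i 0) = (range H).filter (· + 1 ≤ L.getD i 0) := by
    intro i hi
    have hiH := hH _ (List.getD_eq_getElem L 0 hi ▸ List.getElem_mem hi)
    ext ℓ
    simp only [mem_range, mem_filter]
    omega
  calc ∑ i ∈ range L.length, a (i + 1) * ∑ j ∈ Icc 1 (L.getD i 0), b j
      = ∑ i ∈ range L.length, ∑ ℓ ∈ range H,
          if ℓ + 1 ≤ L.getD i 0 then b (ℓ + 1) * a (i + 1) else 0 := by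
        refine sum_congr rfl fun i hi => ?_
        rw [sum_Icc_one_eq_sum_range, hlevels i (mem_range.1 hi), sum_filter, mul_sum]
        exact sum_congr rfl fun ℓ _ => by split_ifs <;> simp [mul_comm]
    _ = ∑ ℓ ∈ range H, b (ℓ + 1) * ∑ j ∈ Icc 1 (L.countP (ℓ + 1 ≤ ·)), a j := by
        rw [sum_comm]
        refine sum_congr rfl fun ℓ _ => ?_
        rw [sum_range_ite_le_getD_of_pairwise_ge _ L _ hsorted, sum_Icc_one_eq_sum_range, mul_sum]

namespace FBT

lemma le_height_of_mem_leafDepths (t : FBT) : ∀ d ∈ t.leafDepths, d ≤ t.height := by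
  induction t with
  | leaf => simp [leafDepths, height]
  | node l r ihl ihr =>
    simp only [leafDepths, Multiset.mem_map, Multiset.mem_add, height]
    rintro _ ⟨d, hd | hd, rfl⟩
    · exact Nat.succ_le_succ ((ihl d hd).trans (le_max_left _ _))
    · exact Nat.succ_le_succ ((ihr d hd).trans (le_max_right _ _))

lemma numLeaves_eq_card_internalDepths_add_one (t : FBT) :
    t.numLeaves = Multiset.card t.internalDepths + 1 := by
  induction t with
  | leaf => simp [numLeaves, leafDepths, internalDepths]
  | node l r ihl ihr =>
    simp only [numLeaves, leafDepths, internalDepths, Multiset.card_map, Multiset.card_add,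
      Multiset.card_cons] at *
    omega

def lAt (t : FBT) (ℓ : ℕ) : ℕ :=
  Multiset.card (t.leafDepths.filter (fun d => ℓ ≤ d))

lemma lAt_zero (t : FBT) : t.lAt 0 = t.numLeaves := by
  simp [lAt, numLeaves]

lemma iAt_zero (t : FBT) : t.iAt 0 = Multiset.card t.internalDepths := by
  simp [iAt]

lemma lAt_node_succ (l r : FBT) (ℓ : ℕ) : (node l r).lAt (ℓ + 1) = l.lAt ℓ + r.lAt ℓ := by
  rw [lAt, leafDepths, Multiset.card_filter_map_add_one_le, Multiset.filter_add,
    Multiset.card_add, lAt, lAt]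

lemma iAt_node_succ (l r : FBT) (ℓ : ℕ) : (node l r).iAt (ℓ + 1) = l.iAt ℓ + r.iAt ℓ := by
  rw [iAt, internalDepths, Multiset.filter_cons_of_neg _ (by omega),
    Multiset.card_filter_map_add_one_le, Multiset.filter_add, Multiset.card_add, iAt, iAt]

/-- Every node at depth `≥ ℓ + 1` is a child of an internal node at depth `≥ ℓ`. -/
lemma lAt_succ_add_iAt_succ (t : FBT) (ℓ : ℕ) : t.lAt (ℓ + 1) + t.iAt (ℓ + 1) = 2 * t.iAt ℓ := by
  induction t generalizing ℓ with
  | leaf => simp [lAt, leafDepths, iAt, internalDepths]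
  | node l r ihl ihr =>
    cases ℓ with
    | zero =>
      rw [lAt_node_succ, iAt_node_succ, lAt_zero, lAt_zero, iAt_zero, iAt_zero, iAt_zero,
        numLeaves_eq_card_internalDepths_add_one, numLeaves_eq_card_internalDepths_add_one]
      simp only [internalDepths, Multiset.card_cons, Multiset.card_map, Multiset.card_add]
      ring
    | succ ℓ =>
      rw [lAt_node_succ, iAt_node_succ, iAt_node_succ]
      linarith [ihl ℓ, ihr ℓ]

end FBT

/-- For any prefix tree `t` of height `h`, the decode time
`Δ(T) = Σ_c freq(c)·Δ_T(c)` (with `Δ_T(c) = Σ_{i ≤ d_T(c)} q̂ i`) equals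
`Σ_{ℓ=0}^{h−1} q̂_{ℓ+1} · P_{2·i_ℓ − i_{ℓ+1}}`, where `P` is the prefix sum array of the
frequencies ordered consistently with the leaf depths (frequency `f 1` paired with the
deepest leaf) and `i_ℓ` is the number of internal nodes at depth ≥ ℓ. -/
theorem stmt_4 (m : ℕ) (w q : ℕ → ℕ) (t : FBT) (f : ℕ → ℕ) (ds : List ℕ)
    (hds : ds = (Multiset.sort t.leafDepths (· ≤ ·)).reverse) :
    (∑ i ∈ Finset.range t.numLeaves,
        f (i + 1) * ∑ j ∈ Finset.Icc 1 (ds.getD i 0), qhatOf m w q j) =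
      ∑ ℓ ∈ Finset.range t.height,
        qhatOf m w q (ℓ + 1) *
          ∑ j ∈ Finset.Icc 1 (2 * t.iAt ℓ - t.iAt (ℓ + 1)), f j := by
  have hcoe : (ds : Multiset ℕ) = t.leafDepths := by
    rw [hds, Multiset.coe_reverse, Multiset.sort_eq]
  have hsorted : ds.Pairwise (· ≥ ·) :=
    hds ▸ List.pairwise_reverse.2 (Multiset.pairwise_sort _ _)
  have hlength : t.numLeaves = ds.length := by
    rw [FBT.numLeaves, ← hcoe, Multiset.coe_card]
  have hcount : ∀ ℓ, ds.countP (ℓ + 1 ≤ ·) = 2 * t.iAt ℓ - t.iAt (ℓ + 1) := by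
    intro ℓ
    rw [← Multiset.coe_countP, hcoe, Multiset.countP_eq_card_filter, ← FBT.lAt,
      ← FBT.lAt_succ_add_iAt_succ, Nat.add_sub_cancel]
  rw [hlength, sum_mul_sum_Icc_getD_eq_of_pairwise_ge ds hsorted t.height
    (fun d hd => t.le_height_of_mem_leafDepths d (hcoe ▸ hd))]
  simp only [hcount]
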